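/- arXiv:2302.05012 — 2 statements merged into one kernel-verified Lean document; each statement's English description precedes it below -/
import Mathlib

section
/- Let X, Y, Z be finite abelian groups (or more generally objects of a category of finite modules). Define F_{XZ}^Y = |{L ≤ Y : L ≅ Z and Y/L ≅ X}|. Then the Riedtmann-Peng formula holds: F_{XZ}^Y = (|Ext^1(X,Z)_Y| / |Hom(X,Z)|) · (|Aut(Y)| / (|Aut(X)| · |Aut(Z)|)), where Ext^1(X,Z)_Y ⊆ Ext^1(X,Z) is the subset of extension classes whose middle term is isomorphic to Y. -/
open Function

/-- Short exact sequences `0 → Z → Y → X → 0` of abelian groups with fixed middle term `Y`. -/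
def SES (X Y Z : Type) [AddCommGroup X] [AddCommGroup Y] [AddCommGroup Z] : Type :=
  {p : (Z →+ Y) × (Y →+ X) // Function.Injective p.1 ∧ Function.Surjective p.2 ∧
    Set.range p.1 = {y : Y | p.2 y = 0}}

/-- Baer equivalence of extensions: an automorphism of the middle term intertwining
the two short exact sequences.  The quotient of `SES X Y Z` by this relation is the
set `Ext^1(X,Z)_Y` of extension classes with middle term isomorphic to `Y`. -/
def extRel (X Y Z : Type) [AddCommGroup X] [AddCommGroup Y] [AddCommGroup Z]
    (p q : SES X Y Z) : Prop :=
  ∃ φ : Y ≃+ Y, (φ.toAddMonoidHom.comp p.1.1 = q.1.1) ∧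
    (q.1.2.comp φ.toAddMonoidHom = p.1.2)

/-!
A short exact sequence `0 → Z → Y → X → 0` is the same thing as a subgroup `L ≤ Y` together
with isomorphisms `Z ≅ L` and `Y/L ≅ X`, so the sequences with middle term `Y` number
`F_{XZ}^Y · |Aut Z| · |Aut X|`. On the other hand `Aut Y` acts on these sequences, its orbits
are the classes in `Ext¹(X,Z)_Y`, and the stabiliser of a sequence `(i, π)` consists of the
automorphisms `1 + i ∘ h ∘ π` with `h ∈ Hom(X,Z)`. Counting pairs (sequence, stabilising
automorphism) shows that the same number equals `|Ext¹(X,Z)_Y| · |Aut Y| / |Hom(X,Z)|`.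
-/

theorem Nat.card_sigma_of_card_eq {ι : Type*} [Finite ι] {β : ι → Type*}
    [∀ i, Finite (β i)] {n : ℕ} (h : ∀ i, Nat.card (β i) = n) :
    Nat.card (Σ i, β i) = Nat.card ι * n := by
  have := Fintype.ofFinite ι
  simp [Nat.card_sigma, h, Nat.card_eq_fintype_card]

theorem AddAction.card_mul_eq_of_card_stabilizer_eq {G α : Type*} [AddGroup G] [AddAction G α]
    [Finite G] [Finite α] {n : ℕ} (h : ∀ a : α, Nat.card (stabilizer G a) = n) :
    Nat.card α * n = Nat.card (orbitRel.Quotient G α) * Nat.card G := by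
  have stabilizers_equiv_fixedBy : (Σ a : α, stabilizer G a) ≃ Σ g : G, fixedBy α g :=
    (Equiv.subtypeProdEquivSigmaSubtype fun (a : α) (g : G) => g ∈ stabilizer G a).symm.trans <|
      ((Equiv.prodComm α G).subtypeEquiv fun _ => Iff.rfl).trans <|
        Equiv.subtypeProdEquivSigmaSubtype fun (g : G) (a : α) => a ∈ fixedBy α g
  rw [← Nat.card_sigma_of_card_eq h, Nat.card_congr stabilizers_equiv_fixedBy,
    Nat.card_congr (sigmaFixedByEquivOrbitsProdAddGroup G α), Nat.card_prod]

def AddEquiv.equivCongr {A B C D : Type*} [Add A] [Add B] [Add C] [Add D]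
    (ab : A ≃+ B) (cd : C ≃+ D) : (A ≃+ C) ≃ (B ≃+ D) where
  toFun e := ab.symm.trans (e.trans cd)
  invFun e := ab.trans (e.trans cd.symm)
  left_inv e := by ext; simp
  right_inv e := by ext; simp

theorem AddMonoidHom.exists_comp_comp_eq {A B C D : Type*}
    [AddGroup A] [AddGroup B] [AddGroup C] [AddGroup D]
    {π : A →+ B} (hπ : Surjective π) {i : C →+ D} (hi : Injective i) (f : A →+ D)
    (hker : π.ker ≤ f.ker) (hrange : f.range ≤ i.range) :
    ∃ h : B →+ C, i.comp (h.comp π) = f := by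
  let f' : A →+ C :=
    (ofInjective hi).symm.toAddMonoidHom.comp (f.codRestrict i.range fun a => hrange ⟨a, rfl⟩)
  have hf' : i.comp f' = f := by ext a; exact apply_ofInjective_symm hi _
  have hker' : π.ker ≤ f'.ker := fun a ha =>
    hi (by rw [map_zero, ← AddMonoidHom.comp_apply, hf']; exact hker ha)
  refine ⟨π.liftOfRightInverse _ (rightInverse_surjInv hπ) ⟨f', hker'⟩, ?_⟩
  rw [liftOfRightInverse_comp, hf']

def subgroupsWithFactors (X Y Z : Type) [AddCommGroup X] [AddCommGroup Y] [AddCommGroup Z] :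
    Set (AddSubgroup Y) :=
  {L | Nonempty (L ≃+ Z) ∧ Nonempty ((Y ⧸ L) ≃+ X)}

namespace SES

variable {X Y Z : Type} [AddCommGroup X] [AddCommGroup Y] [AddCommGroup Z]

theorem mem_range_iff (p : SES X Y Z) {y : Y} : y ∈ Set.range p.1.1 ↔ p.1.2 y = 0 :=
  Set.ext_iff.mp p.2.2.2 y

theorem apply_apply_eq_zero (p : SES X Y Z) (z : Z) : p.1.2 (p.1.1 z) = 0 :=
  p.mem_range_iff.mp ⟨z, rfl⟩

theorem ker_eq_range (p : SES X Y Z) : p.1.2.ker = p.1.1.range := by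
  ext y
  exact p.mem_range_iff.symm

instance : AddAction (AddAut Y) (SES X Y Z) where
  vadd φ p := ⟨(φ.toAddMonoidHom.comp p.1.1, p.1.2.comp φ.symm.toAddMonoidHom),
    φ.injective.comp p.2.1, p.2.2.1.comp φ.symm.surjective, by
      rw [AddMonoidHom.coe_comp, Set.range_comp, p.2.2.2]
      exact φ.toEquiv.image_eq_preimage_symm _⟩
  zero_vadd _ := rfl
  add_vadd _ _ _ := rfl

theorem vadd_val (φ : AddAut Y) (p : SES X Y Z) :
    (φ +ᵥ p).1 = (φ.toAddMonoidHom.comp p.1.1, p.1.2.comp φ.symm.toAddMonoidHom) := rfl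

theorem extRel_iff (p q : SES X Y Z) : extRel X Y Z p q ↔ ∃ φ : AddAut Y, φ +ᵥ p = q := by
  refine exists_congr fun φ => ⟨fun ⟨hi, hπ⟩ => Subtype.ext (Prod.ext hi ?_), ?_⟩
  · ext y
    simp [vadd_val, ← hπ]
  · rintro rfl
    exact ⟨rfl, by ext y; simp [vadd_val]⟩

def quotExtRelEquiv :
    Quot (extRel X Y Z) ≃ AddAction.orbitRel.Quotient (AddAut Y) (SES X Y Z) :=
  Quot.congrRight fun p q => by
    rw [extRel_iff, AddAction.orbitRel_apply, AddAction.mem_orbit_symm, AddAction.mem_orbit_iff]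

def shear (p : SES X Y Z) (h : X →+ Z) : AddAut Y where
  toFun y := y + p.1.1 (h (p.1.2 y))
  invFun y := y - p.1.1 (h (p.1.2 y))
  left_inv y := by simp [p.apply_apply_eq_zero]
  right_inv y := by simp [p.apply_apply_eq_zero]
  map_add' a b := by simp only [map_add]; abel

theorem shear_apply (p : SES X Y Z) (h : X →+ Z) (y : Y) :
    p.shear h y = y + p.1.1 (h (p.1.2 y)) := rfl

theorem shear_mem_stabilizer (p : SES X Y Z) (h : X →+ Z) :
    p.shear h ∈ AddAction.stabilizer (AddAut Y) p := by
  refine AddAction.mem_stabilizer_iff.mpr (Subtype.ext (Prod.ext ?_ ?_))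
  · ext z
    simp [vadd_val, shear_apply, p.apply_apply_eq_zero]
  · ext y
    show p.1.2 (y - p.1.1 (h (p.1.2 y))) = p.1.2 y
    simp [p.apply_apply_eq_zero]

theorem shear_injective (p : SES X Y Z) : Injective p.shear := by
  intro h₁ h₂ heq
  ext x
  obtain ⟨y, rfl⟩ := p.2.2.1 x
  apply p.2.1
  simpa [shear_apply] using DFunLike.congr_fun heq y

theorem exists_shear_eq (p : SES X Y Z) {φ : AddAut Y}
    (hφ : φ ∈ AddAction.stabilizer (AddAut Y) p) : ∃ h, p.shear h = φ := by
  rw [AddAction.mem_stabilizer_iff] at hφ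
  obtain ⟨hi, hπ⟩ := Prod.ext_iff.mp (congrArg Subtype.val hφ)
  have hπ' (y : Y) : p.1.2 (φ y) = p.1.2 y := by
    simpa [vadd_val] using (DFunLike.congr_fun hπ (φ y)).symm
  have hker : p.1.2.ker ≤ (φ.toAddMonoidHom - AddMonoidHom.id Y).ker := by
    intro y hy
    rw [p.ker_eq_range] at hy
    obtain ⟨z, rfl⟩ := hy
    simpa [vadd_val, sub_eq_zero] using DFunLike.congr_fun hi z
  have hrange : (φ.toAddMonoidHom - AddMonoidHom.id Y).range ≤ p.1.1.range := by
    rintro _ ⟨y, rfl⟩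
    rw [← p.ker_eq_range, AddMonoidHom.mem_ker]
    simp [hπ']
  obtain ⟨h, hh⟩ := AddMonoidHom.exists_comp_comp_eq p.2.2.1 p.2.1 _ hker hrange
  refine ⟨h, AddEquiv.ext fun y => ?_⟩
  simpa [shear_apply, eq_sub_iff_add_eq'] using DFunLike.congr_fun hh y

theorem card_stabilizer (p : SES X Y Z) :
    Nat.card (AddAction.stabilizer (AddAut Y) p) = Nat.card (X →+ Z) := by
  refine (Nat.card_eq_of_bijective (fun h => ⟨p.shear h, p.shear_mem_stabilizer h⟩)
    ⟨fun h₁ h₂ heq => p.shear_injective (congrArg Subtype.val heq), ?_⟩).symm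
  rintro ⟨φ, hφ⟩
  obtain ⟨h, rfl⟩ := p.exists_shear_eq hφ
  exact ⟨h, rfl⟩

noncomputable def rangeFiberEquiv (L : AddSubgroup Y) :
    {p : SES X Y Z // p.1.1.range = L} ≃ (Z ≃+ L) × ((Y ⧸ L) ≃+ X) where
  toFun p := ((AddMonoidHom.ofInjective p.1.2.1).trans (AddEquiv.addSubgroupCongr p.2),
    (QuotientAddGroup.quotientAddEquivOfEq (p.1.ker_eq_range.trans p.2).symm).trans
      (QuotientAddGroup.quotientKerEquivOfSurjective _ p.1.2.2.1))
  invFun e :=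
    ⟨⟨(L.subtype.comp e.1.toAddMonoidHom, e.2.toAddMonoidHom.comp (QuotientAddGroup.mk' L)),
      Subtype.val_injective.comp e.1.injective,
      e.2.surjective.comp (QuotientAddGroup.mk'_surjective L), by
        ext y
        simp [QuotientAddGroup.eq_zero_iff]⟩, by
        rw [AddMonoidHom.range_comp, AddMonoidHom.range_eq_top_of_surjective _ e.1.surjective,
          ← AddMonoidHom.range_eq_map, AddSubgroup.range_subtype]⟩
  left_inv p := rfl
  right_inv e := by
    refine Prod.ext (AddEquiv.ext fun _ => rfl) (AddEquiv.ext fun q => ?_)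
    induction q using QuotientAddGroup.induction_on
    rfl

noncomputable def rangeSubgroup (p : SES X Y Z) : subgroupsWithFactors X Y Z :=
  let e := rangeFiberEquiv _ ⟨p, rfl⟩
  ⟨p.1.1.range, ⟨e.1.symm⟩, ⟨e.2⟩⟩

instance [Finite X] [Finite Y] [Finite Z] : Finite (SES X Y Z) :=
  have : Finite (Z →+ Y) := FunLike.finite _
  have : Finite (Y →+ X) := FunLike.finite _
  Subtype.finite

theorem card_eq_card_subgroupsWithFactors_mul [Finite X] [Finite Y] [Finite Z] :
    Nat.card (SES X Y Z)
      = Nat.card (subgroupsWithFactors X Y Z) * (Nat.card (AddAut Z) * Nat.card (AddAut X)) := by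
  rw [← Nat.card_sigma_of_card_eq (β := fun L => {p : SES X Y Z // p.rangeSubgroup = L}) ?_]
  · exact Nat.card_congr (Equiv.sigmaFiberEquiv rangeSubgroup).symm
  rintro ⟨L, ⟨eZ⟩, ⟨eX⟩⟩
  rw [Nat.card_congr ((Equiv.subtypeEquivRight fun _ => Subtype.coe_inj.symm).trans
      (rangeFiberEquiv L)),
    Nat.card_prod, Nat.card_congr ((AddEquiv.refl Z).equivCongr eZ),
    Nat.card_congr (eX.equivCongr (AddEquiv.refl X))]

theorem card_mul_card_addMonoidHom [Finite X] [Finite Y] [Finite Z] :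
    Nat.card (SES X Y Z) * Nat.card (X →+ Z)
      = Nat.card (Quot (extRel X Y Z)) * Nat.card (AddAut Y) := by
  have : Finite (AddAut Y) := FunLike.finite _
  rw [Nat.card_congr quotExtRelEquiv]
  exact AddAction.card_mul_eq_of_card_stabilizer_eq card_stabilizer

end SES

/-- The Riedtmann-Peng formula: the Hall number `F_{XZ}^Y`, counting subgroups
`L ≤ Y` with `L ≅ Z` and `Y/L ≅ X`, equals
`(|Ext^1(X,Z)_Y| / |Hom(X,Z)|) · (|Aut Y| / (|Aut X| · |Aut Z|))`. -/
theorem stmt8 (X Y Z : Type) [AddCommGroup X] [Fintype X] [AddCommGroup Y] [Fintype Y]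
    [AddCommGroup Z] [Fintype Z] :
    (Nat.card {L : AddSubgroup Y //
        Nonempty (L ≃+ Z) ∧ Nonempty ((Y ⧸ L) ≃+ X)} : ℚ)
      = ((Nat.card (Quot (extRel X Y Z)) : ℚ) / (Nat.card (X →+ Z) : ℚ))
        * ((Nat.card (AddAut Y) : ℚ) / ((Nat.card (AddAut X) : ℚ) * (Nat.card (AddAut Z) : ℚ))) := by
  have : Finite (X →+ Z) := FunLike.finite _
  have : Finite (AddAut X) := FunLike.finite _
  have : Finite (AddAut Z) := FunLike.finite _
  have hHom : (Nat.card (X →+ Z) : ℚ) ≠ 0 := Nat.cast_ne_zero.mpr Nat.card_pos.ne'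
  have hAutX : (Nat.card (AddAut X) : ℚ) ≠ 0 := Nat.cast_ne_zero.mpr Nat.card_pos.ne'
  have hAutZ : (Nat.card (AddAut Z) : ℚ) ≠ 0 := Nat.cast_ne_zero.mpr Nat.card_pos.ne'
  have hFibers := SES.card_eq_card_subgroupsWithFactors_mul (X := X) (Y := Y) (Z := Z)
  have hOrbits := SES.card_mul_card_addMonoidHom (X := X) (Y := Y) (Z := Z)
  qify at hFibers hOrbits
  change (Nat.card (subgroupsWithFactors X Y Z) : ℚ) = _
  field_simp
  linear_combination hOrbits - (Nat.card (X →+ Z) : ℚ) * hFibers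
end

section
/- Let Q be a quiver with vertex ℓ a sink having no loops, j ≠ ℓ another vertex, and a = -a_{ℓj} ≥ 0 the total number of arrows between ℓ and j. Let N be a representation of Q of dimension l supported at j, and consider the reflected quiver s_ℓQ with arrows α_1,…,α_a : ℓ → j. If M = (M_i, M_α) is a representation of s_ℓQ with dim M_j = l, dim M_ℓ = la, M restricted to j isomorphic to N, and ∩_{k=1}^a ker M_{α_k} = 0, then M is isomorphic to the representation Y with Y_j = N_j, Y_ℓ = N_j^{⊕a}, Y_{α_k} the k-th projection N_j^{⊕a} → N_j, and Y_β = N_β for loops β at j. -/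
open Finset

/-- Building block for the braid group action (Proposition 3.10):
Let `ℓ` be a loop-free sink of `Q`, `j ≠ ℓ` a vertex with `b` loops, and `a` the number of
arrows between `ℓ` and `j`.  Let `N` be a representation of dimension `l` supported at `j`
(vector space `Nj` with loop maps `Nloops`).  If `M` is a representation of the reflected
quiver `s_ℓ Q` (spaces `V` at `j`, `W` at `ℓ`, loop maps `loops`, arrow maps
`arrows k : W → V`) with `dim W = l·a`, `M|_j ≅ N`, and `⋂ ker (arrows k) = 0`,
then `M ≅ F_ℓ^+(N)`, i.e. there are compatible isomorphisms `V ≅ Nj` and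
`W ≅ Nj^{⊕a}` identifying `arrows k` with the `k`-th projection and the loops with
those of `N`. -/
theorem stmt11 (k : Type) [Field k] (a b l : ℕ)
    (V W Nj : Type) [AddCommGroup V] [Module k V] [AddCommGroup W] [Module k W]
    [AddCommGroup Nj] [Module k Nj]
    [FiniteDimensional k V] [FiniteDimensional k W] [FiniteDimensional k Nj]
    (loops : Fin b → (V →ₗ[k] V)) (arrows : Fin a → (W →ₗ[k] V))
    (Nloops : Fin b → (Nj →ₗ[k] Nj))
    (hNdim : Module.finrank k Nj = l)
    (hWdim : Module.finrank k W = l * a)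
    (hrestr : ∃ e : V ≃ₗ[k] Nj, ∀ (t : Fin b) (x : V), e (loops t x) = Nloops t (e x))
    (hker : (⨅ i : Fin a, LinearMap.ker (arrows i)) = ⊥) :
    ∃ (φj : V ≃ₗ[k] Nj) (φℓ : W ≃ₗ[k] (Fin a → Nj)),
      (∀ (t : Fin b) (x : V), φj (loops t x) = Nloops t (φj x)) ∧
      (∀ (i : Fin a) (w : W), φℓ w i = φj (arrows i w)) := by
  obtain ⟨e, he⟩ := hrestr
  set f : W →ₗ[k] (Fin a → Nj) := LinearMap.pi (fun i => e.toLinearMap ∘ₗ arrows i) with hf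
  have hinj : Function.Injective f := by
    rw [← LinearMap.ker_eq_bot, LinearMap.ker_pi]
    have : ∀ i, LinearMap.ker (e.toLinearMap ∘ₗ arrows i) = LinearMap.ker (arrows i) := by
      intro i
      ext x
      simp [LinearMap.mem_ker, LinearEquiv.map_eq_zero_iff]
    simp_rw [this]
    exact hker
  have hdim : Module.finrank k W = Module.finrank k (Fin a → Nj) := by
    rw [hWdim, Module.finrank_pi_fintype, hNdim]
    simp [mul_comm]
  exact ⟨e, LinearEquiv.ofBijective f
    ⟨hinj, (LinearMap.injective_iff_surjective_of_finrank_eq_finrank hdim).mp hinj⟩,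
    he, fun i w => rfl⟩
end
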